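/- For every n ≥ 1, the real Lie algebras g₍₃ₙ₊₂,ₖ₎ for 0 ≤ k ≤ n are pairwise non-isomorphic: if 0 ≤ k < k' ≤ n then g₍₃ₙ₊₂,ₖ₎ and g₍₃ₙ₊₂,ₖ'₎ are not isomorphic as real Lie algebras. -/

import Mathlib

open Module

/-- The bracket relations of the real Lie algebra `g₍₃ₙ₊₂,ₖ₎` with respect to a basis indexed by
`(Fin n × Bool) ⊕ Option (Fin (n+1))`: `Sum.inl (i, false)` is `X₂ᵢ₋₁`, `Sum.inl (i, true)` is
`X₂ᵢ`, `Sum.inr none` is the central element `X₂ₙ₊₁` of the nilradical and `Sum.inr (some j)`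
is `Yⱼ₊₁`. -/
def IsG3n2k (n k : ℕ) {g : Type*} [LieRing g] [LieAlgebra ℝ g]
    (b : Basis ((Fin n × Bool) ⊕ Option (Fin (n + 1))) ℝ g) : Prop :=
  (∀ i : Fin n,
    ⁅b (Sum.inl (i, false)), b (Sum.inl (i, true))⁆ = b (Sum.inr none)) ∧
  (∀ (i j : Fin n) (x y : Bool), i ≠ j →
    ⁅b (Sum.inl (i, x)), b (Sum.inl (j, y))⁆ = 0) ∧
  (∀ (i : Fin n) (x : Bool), ⁅b (Sum.inl (i, x)), b (Sum.inr none)⁆ = 0) ∧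
  (∀ j j' : Fin (n + 1), ⁅b (Sum.inr (some j)), b (Sum.inr (some j'))⁆ = 0) ∧
  (∀ j : Fin (n + 1), ⁅b (Sum.inr (some j)), b (Sum.inr none)⁆ =
    if j.val = n then (2 : ℝ) • b (Sum.inr none) else 0) ∧
  (∀ (j : Fin (n + 1)) (i : Fin n) (x : Bool),
    ⁅b (Sum.inr (some j)), b (Sum.inl (i, x))⁆ =
      if j.val = n then b (Sum.inl (i, x))
      else if j.val = i.val then
        (if j.val < k then
          cond x (-b (Sum.inl (i, false))) (b (Sum.inl (i, true)))
        else
          cond x (-b (Sum.inl (i, true))) (b (Sum.inl (i, false))))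
      else 0)

/-!
`ad Yₙ₊₁` acts diagonally on the basis, with eigenvalue `1` on the `Xᵢ` (`i ≤ 2n`), `2` on `X₂ₙ₊₁`
and `0` on the `Yⱼ`. Since `ad` is skew for the Killing form `κ`, eigenvectors whose eigenvalues do
not add up to `0` are `κ`-orthogonal, so `κ` vanishes on the nilradical. On the `Yⱼ` a direct
trace computation gives `κ(Yⱼ, Yⱼ') = 0` for `j ≠ j'`, `κ(Yⱼ, Yⱼ) = -2` for the `k` rotations,
`2` for the hyperbolic ones and `2n + 4` for `Yₙ₊₁`. Hence the basis is `κ`-orthogonal with exactly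
`k` negative values, and by Sylvester's law of inertia the negative index of `κ`, an isomorphism
invariant, equals `k`.
-/

theorem LieModule.traceForm_eq_sum_repr {R L M ι : Type*} [CommRing R] [LieRing L]
    [LieAlgebra R L] [AddCommGroup M] [Module R M] [LieRingModule L M] [LieModule R L M]
    [Fintype ι] (b : Basis ι R M) (x y : L) :
    traceForm R L M x y = ∑ i, b.repr ⁅x, ⁅y, b i⁆⁆ i := by
  classical
  rw [traceForm_apply_apply, LinearMap.trace_eq_matrix_trace R b, Matrix.trace]
  simp [LinearMap.toMatrix_apply]

theorem LieModule.traceForm_eq_zero_of_lie_eq_smul {R L M : Type*} [CommRing R] [IsDomain R]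
    [LieRing L] [LieAlgebra R L] [AddCommGroup M] [Module R M] [LieRingModule L M]
    [LieModule R L M] {h x y : L} {a c : R} (hx : ⁅h, x⁆ = a • x) (hy : ⁅h, y⁆ = c • y)
    (hac : a + c ≠ 0) : traceForm R L M x y = 0 := by
  have hskew := traceForm_apply_lie_apply' R L M h x y
  rw [hx, hy, map_smul, LinearMap.smul_apply, map_smul, smul_eq_mul, smul_eq_mul] at hskew
  have : (a + c) * traceForm R L M x y = 0 := by linear_combination hskew
  exact (mul_eq_zero.mp this).resolve_left hac

theorem LinearMap.BilinForm.sigNeg_toQuadraticMap_of_iIsOrtho {K V ι : Type*} [Field K]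
    [LinearOrder K] [IsStrictOrderedRing K] [AddCommGroup V] [Module K V] [Fintype ι]
    {B : LinearMap.BilinForm K V} {v : Basis ι K V} (hv : B.iIsOrtho v) :
    sigNeg B.toQuadraticMap = {i | B (v i) (v i) < 0}.ncard := by
  let : Invertible (2 : K) := invertibleOfNonzero two_ne_zero
  have hQ : (QuadraticMap.associated (R := K) B.toQuadraticMap).IsOrthoᵢ v := fun i j hij => by
    simp [Function.onFun, QuadraticMap.associated_toQuadraticMap, hv hij, hv hij.symm]
  apply QuadraticForm.sigNeg_of_equiv_weightedSumSquares
  exact QuadraticMap.basisRepr_eq_of_iIsOrtho _ _ hQ ▸ ⟨QuadraticMap.isometryEquivBasisRepr _ v⟩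

theorem LieEquiv.sigNeg_killingForm {R L L' : Type*} [CommRing R] [LinearOrder R] [LieRing L]
    [LieAlgebra R L] [LieRing L'] [LieAlgebra R L'] (e : L ≃ₗ⁅R⁆ L') :
    sigNeg (killingForm R L').toQuadraticMap = sigNeg (killingForm R L).toQuadraticMap :=
  (QuadraticMap.Equivalent.sigNeg_eq ⟨{ e.toLinearEquiv with map_app' := fun x => by simp }⟩).symm

/-- The eigenvalue of `ad Yₙ₊₁` on the basis vector indexed by `i`. -/
def G3n2k.adLastEigenvalue {n : ℕ} : (Fin n × Bool) ⊕ Option (Fin (n + 1)) → ℝ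
  | .inl _ => 1
  | .inr none => 2
  | .inr (some _) => 0

namespace IsG3n2k

open G3n2k

variable {n k : ℕ} {g : Type*} [LieRing g] [LieAlgebra ℝ g]
  {b : Basis ((Fin n × Bool) ⊕ Option (Fin (n + 1))) ℝ g}

theorem lie_last_basis (hg : IsG3n2k n k b) (i : (Fin n × Bool) ⊕ Option (Fin (n + 1))) :
    ⁅b (.inr (some (Fin.last n))), b i⁆ = adLastEigenvalue i • b i := by
  obtain ⟨-, -, -, hYY, hYZ, hYX⟩ := hg
  rcases i with ⟨p, x⟩ | _ | j
  · simpa [adLastEigenvalue] using hYX (Fin.last n) p x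
  · simpa [adLastEigenvalue] using hYZ (Fin.last n)
  · simpa [adLastEigenvalue] using hYY (Fin.last n) j

theorem killingForm_basis_eq_zero (hg : IsG3n2k n k b)
    {u v : (Fin n × Bool) ⊕ Option (Fin (n + 1))}
    (huv : adLastEigenvalue u + adLastEigenvalue v ≠ 0) : killingForm ℝ g (b u) (b v) = 0 :=
  LieModule.traceForm_eq_zero_of_lie_eq_smul (hg.lie_last_basis u) (hg.lie_last_basis v) huv

theorem sum_repr_lie_lie_inl (hg : IsG3n2k n k b) (j j' : Fin (n + 1)) (p : Fin n) :
    ∑ x : Bool, b.repr ⁅b (.inr (some j)), ⁅b (.inr (some j')), b (.inl (p, x))⁆⁆ (.inl (p, x)) =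
      if j = j' then
        (if j.val = n then 2 else if j.val = p.val then (if j.val < k then -2 else 2) else 0)
      else 0 := by
  obtain ⟨-, -, -, -, -, hYX⟩ := hg
  rw [Fintype.sum_bool, hYX j' p true, hYX j' p false]
  split_ifs <;> simp [hYX, Fin.ext_iff] at * <;> (try split_ifs) <;> first | omega | norm_num

theorem killingForm_basis_some_some (hg : IsG3n2k n k b) (j j' : Fin (n + 1)) :
    killingForm ℝ g (b (.inr (some j))) (b (.inr (some j'))) =
      if j = j' then (if j.val = n then 2 * (n : ℝ) + 4 else if j.val < k then -2 else 2)
      else 0 := by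
  rw [LieModule.traceForm_eq_sum_repr b, Fintype.sum_sum_type, Fintype.sum_prod_type,
    Fintype.sum_option]
  simp only [hg.sum_repr_lie_lie_inl]
  obtain ⟨-, -, -, hYY, hYZ, -⟩ := hg
  simp only [hYY, hYZ, lie_zero, map_zero, Finsupp.coe_zero,
    Pi.zero_apply, Finset.sum_const_zero, add_zero]
  rcases eq_or_ne j j' with rfl | hjj'
  · by_cases hj : j.val = n
    · norm_num [hj, hYZ, mul_comm]
    · have hp (p : Fin n) : j.val = p.val ↔ p = ⟨j, by omega⟩ := by rw [Fin.ext_iff, eq_comm]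
      simp [hj, hp]
  · have : ¬ (j.val = n ∧ j'.val = n) := fun h => hjj' (Fin.ext (h.1.trans h.2.symm))
    by_cases hj' : j'.val = n <;> simp_all

theorem iIsOrtho_killingForm (hg : IsG3n2k n k b) : (killingForm ℝ g).iIsOrtho b := by
  rintro (p | _ | j) (q | _ | j') h
  case inr.some.inr.some =>
    have hjj' : j ≠ j' := by simpa using h
    simp [Function.onFun, hg.killingForm_basis_some_some, hjj']
  all_goals exact hg.killingForm_basis_eq_zero (by norm_num [adLastEigenvalue])

theorem sigNeg_killingForm (hg : IsG3n2k n k b) (hk : k ≤ n) :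
    sigNeg (killingForm ℝ g).toQuadraticMap = k := by
  have hneg : {i | killingForm ℝ g (b i) (b i) < 0} =
      (fun j => .inr (some j)) '' {j : Fin (n + 1) | j.val < k} := by
    ext (p | _ | j)
    · simp [hg.killingForm_basis_eq_zero (u := .inl p) (v := .inl p)
        (by norm_num [adLastEigenvalue])]
    · simp [hg.killingForm_basis_eq_zero (u := .inr none) (v := .inr none)
        (by norm_num [adLastEigenvalue])]
    · simp only [Set.mem_ofPred_eq, hg.killingForm_basis_some_some, ↓reduceIte, Set.mem_image,
        Sum.inr.injEq, Option.some.injEq, exists_eq_right]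
      split_ifs with hjn hjk
      · exact iff_of_false (by norm_num; positivity) (by omega)
      · exact iff_of_true (by norm_num) hjk
      · exact iff_of_false (by norm_num) hjk
  rw [LinearMap.BilinForm.sigNeg_toQuadraticMap_of_iIsOrtho hg.iIsOrtho_killingForm, hneg,
    Set.ncard_image_of_injective _ (fun _ _ h => by simpa using h), Set.ncard_eq_toFinset_card',
    Set.toFinset_ofPred, Fin.card_filter_val_lt]
  omega

end IsG3n2k

theorem g3n2k_pairwise_nonisomorphic_general (n : ℕ) (k k' : ℕ)
    (hk : k < k') (hk' : k' ≤ n)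
    {g : Type} [LieRing g] [LieAlgebra ℝ g]
    (b : Basis ((Fin n × Bool) ⊕ Option (Fin (n + 1))) ℝ g) (hg : IsG3n2k n k b)
    {g' : Type} [LieRing g'] [LieAlgebra ℝ g']
    (b' : Basis ((Fin n × Bool) ⊕ Option (Fin (n + 1))) ℝ g') (hg' : IsG3n2k n k' b') :
    IsEmpty (g ≃ₗ⁅ℝ⁆ g') := by
  refine ⟨fun e => ?_⟩
  have h := hg'.sigNeg_killingForm hk'
  rw [e.sigNeg_killingForm, hg.sigNeg_killingForm (by omega)] at h
  omega

theorem g3n2k_pairwise_nonisomorphic (n : ℕ) (hn : 1 ≤ n) (k k' : ℕ)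
    (hk : k < k') (hk' : k' ≤ n)
    {g : Type} [LieRing g] [LieAlgebra ℝ g]
    (b : Basis ((Fin n × Bool) ⊕ Option (Fin (n + 1))) ℝ g) (hg : IsG3n2k n k b)
    {g' : Type} [LieRing g'] [LieAlgebra ℝ g']
    (b' : Basis ((Fin n × Bool) ⊕ Option (Fin (n + 1))) ℝ g') (hg' : IsG3n2k n k' b') :
    IsEmpty (g ≃ₗ⁅ℝ⁆ g') :=
  g3n2k_pairwise_nonisomorphic_general n k k' hk hk' b hg b' hg'
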